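/- If R_t is a convex upper continuous (c.u.c.) conditional risk measure and w ∈ M_{t,+}^+ \ M_t^⊥, then the scalarization ρ_t(X) := inf_{u∈R_t(X)} E[wᵀu] (with values in the extended reals, inf over the empty set being +∞) is lower semicontinuous on L^p. -/

import Mathlib

open MeasureTheory Set Filter
open scoped ENNReal Pointwise

noncomputable section

namespace MultiRisk

/-- The ambient context: a filtered probability space on `[0,T]` satisfying the usual
conditions with `ℱ T = m0`, dimensions `d` and `em ≤ d` (the number of eligible assets),
and conjugate exponents `p, q ∈ [1,∞]`. -/
structure Ctx (Ω : Type*) where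
  m0 : MeasurableSpace Ω
  P : @MeasureTheory.Measure Ω m0
  probP : @MeasureTheory.IsProbabilityMeasure Ω m0 P
  d : ℕ
  em : ℕ
  em_pos : 1 ≤ em
  em_le : em ≤ d
  p : ℝ≥0∞
  hp : 1 ≤ p
  q : ℝ≥0∞
  hpq : 1 / p + 1 / q = 1
  T : ℝ
  hT : 0 ≤ T
  F : @MeasureTheory.Filtration Ω ℝ _ m0
  hFT : F T = m0
  /-- usual conditions: right-continuity of the filtration -/
  right_cont : ∀ t : ℝ, F t = ⨅ s ∈ Set.Ioi t, F s
  /-- usual conditions: completeness, `F 0` contains all `P`-null sets -/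
  complete : ∀ N : Set Ω, P N = 0 → MeasurableSet[F 0] N

variable {Ω : Type*}

instance factLeP (C : Ctx Ω) : Fact (1 ≤ C.p) := ⟨C.hp⟩

/-- portfolio vectors: `ℝ^d` (with an arbitrary norm; here the sup norm). -/
abbrev EV (C : Ctx Ω) : Type _ := Fin C.d → ℝ

/-- the space `L^p(Ω, F_T, P; ℝ^d)`. -/
abbrev LpSp (C : Ctx Ω) : Type _ := MeasureTheory.Lp (α := Ω) (EV C) C.p C.P

/-- pointwise pairing `wᵀu`. -/
def pairPt (C : Ctx Ω) (w u : Ω → EV C) (ω : Ω) : ℝ := ∑ i, w ω i * u ω i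

/-- the bilinear pairing `E[wᵀu]`. -/
def pairF (C : Ctx Ω) (w u : Ω → EV C) : ℝ := ∫ ω, pairPt C w u ω ∂C.P

/-- `F_t`-measurability (in the a.e. sense) of a vector-valued function. -/
def measT (C : Ctx Ω) (t : ℝ) (v : Ω → EV C) : Prop :=
  @MeasureTheory.AEStronglyMeasurable _ _ _ (C.F t) C.m0 v C.P

/-- `F_t`-measurability (in the a.e. sense) of a scalar function. -/
def measT1 (C : Ctx Ω) (t : ℝ) (φ : Ω → ℝ) : Prop :=
  @MeasureTheory.AEStronglyMeasurable _ _ _ (C.F t) C.m0 φ C.P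

/-- the subspace `L^p_t` of `F_t`-measurable elements of `L^p`. -/
def Lpt (C : Ctx Ω) (t : ℝ) : Set (LpSp C) := {f | measT C t ⇑f}

/-- the cone `L^p_+` of a.s. componentwise nonnegative elements. -/
def LpPos (C : Ctx Ω) : Set (LpSp C) := {f | ∀ᵐ ω ∂C.P, ∀ i, 0 ≤ (⇑f : Ω → EV C) ω i}

/-- membership of a vector of `ℝ^d` in `M = ℝ^m × {0}^{d-m}`. -/
def inM (C : Ctx Ω) (x : EV C) : Prop := ∀ i : Fin C.d, C.em ≤ (i : ℕ) → x i = 0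

/-- the space `M_t` of eligible portfolios. -/
def Msp (C : Ctx Ω) (t : ℝ) : Set (LpSp C) :=
  {f | f ∈ Lpt C t ∧ ∀ᵐ ω ∂C.P, inM C ((⇑f : Ω → EV C) ω)}

/-- `M_{t,+}`. -/
def MspPos (C : Ctx Ω) (t : ℝ) : Set (LpSp C) := Msp C t ∩ LpPos C

/-- the half space `G_t(w) ⊆ L^p_t`. -/
def G (C : Ctx Ω) (t : ℝ) (w : Ω → EV C) : Set (LpSp C) :=
  {u ∈ Lpt C t | 0 ≤ pairF C w ⇑u}

/-- `G_t^M(w) = G_t(w) ∩ M_t`. -/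
def GM (C : Ctx Ω) (t : ℝ) (w : Ω → EV C) : Set (LpSp C) := G C t w ∩ Msp C t

/-- the conditional "half space" `Γ_t(w) ⊆ L^p_t`. -/
def Gam (C : Ctx Ω) (t : ℝ) (w : Ω → EV C) : Set (LpSp C) :=
  {u ∈ Lpt C t | ∀ᵐ ω ∂C.P, 0 ≤ pairPt C w ⇑u ω}

/-- `Γ_t^M(w) = Γ_t(w) ∩ M_t`. -/
def GamM (C : Ctx Ω) (t : ℝ) (w : Ω → EV C) : Set (LpSp C) := Gam C t w ∩ Msp C t

/-- Minkowski subtraction `A -. B = {m ∈ M_t : B + {m} ⊆ A}` inside `M_t`. -/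
def msub (C : Ctx Ω) (t : ℝ) (A B : Set (LpSp C)) : Set (LpSp C) :=
  {x ∈ Msp C t | ∀ b ∈ B, b + x ∈ A}

/-- the positive dual cone (in `L^q_t`, represented by functions) of a set `S ⊆ L^p`. -/
def posDual (C : Ctx Ω) (t : ℝ) (S : Set (LpSp C)) : Set (Ω → EV C) :=
  {v | MeasureTheory.MemLp v C.q C.P ∧ measT C t v ∧ ∀ u ∈ S, 0 ≤ pairF C v ⇑u}

/-- the orthogonal space `M_t^⊥ ⊆ L^q_t`. -/
def Mperp (C : Ctx Ω) (t : ℝ) : Set (Ω → EV C) :=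
  {v | MeasureTheory.MemLp v C.q C.P ∧ measT C t v ∧ ∀ u ∈ Msp C t, pairF C v ⇑u = 0}

/-- `A^+ := {v ∈ L^q : E[vᵀ Y] ≥ 0 for all Y ∈ A}`. -/
def accDual (C : Ctx Ω) (A : Set (LpSp C)) : Set (Ω → EV C) :=
  {v | MeasureTheory.MemLp v C.q C.P ∧ ∀ Y ∈ A, 0 ≤ pairF C v ⇑Y}

/-- a `d`-dimensional vector probability measure absolutely continuous w.r.t. `P`. -/
def IsVProb (C : Ctx Ω) (Q : Fin C.d → @MeasureTheory.Measure Ω C.m0) : Prop :=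
  (∀ i, @MeasureTheory.IsProbabilityMeasure Ω C.m0 (Q i)) ∧ (∀ i, Q i ≪ C.P)

/-- the density `dQ_i/dP` as a real valued function. -/
def dens (C : Ctx Ω) (Q : Fin C.d → @MeasureTheory.Measure Ω C.m0) (i : Fin C.d) (ω : Ω) : ℝ :=
  (@MeasureTheory.Measure.rnDeriv Ω C.m0 (Q i) C.P ω).toReal

/-- `ξ̄_{t,s}(Q_i)`. -/
def xibar (C : Ctx Ω) (Q : Fin C.d → @MeasureTheory.Measure Ω C.m0) (t s : ℝ) (ω : Ω)
    (i : Fin C.d) : ℝ :=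
  if 0 < MeasureTheory.condExp (C.F t) C.P (dens C Q i) ω then
    MeasureTheory.condExp (C.F s) C.P (dens C Q i) ω /
      MeasureTheory.condExp (C.F t) C.P (dens C Q i) ω
  else 1

/-- the `Q`-conditional expectation `E^Q[X | F_t]` (componentwise). -/
def condExpQ (C : Ctx Ω) (Q : Fin C.d → @MeasureTheory.Measure Ω C.m0) (t : ℝ)
    (X : Ω → EV C) : Ω → EV C :=
  fun ω i => MeasureTheory.condExp (C.F t) C.P (fun ω' => xibar C Q t C.T ω' i * X ω' i) ω

/-- `w_t^s(Q,w) = diag(w) ξ_{t,s}(Q)`. -/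
def wts (C : Ctx Ω) (Q : Fin C.d → @MeasureTheory.Measure Ω C.m0) (w : Ω → EV C)
    (t s : ℝ) : Ω → EV C :=
  fun ω i => w ω i * xibar C Q t s ω i

/-- `Q = P|_{F_t}`, i.e. `ξ_{0,t}(Q) = (1,…,1)`. -/
def restrP (C : Ctx Ω) (Q : Fin C.d → @MeasureTheory.Measure Ω C.m0) (t : ℝ) : Prop :=
  ∀ᵐ ω ∂C.P, ∀ i, xibar C Q 0 t ω i = 1

/-- the set of dual variables `W_t`. -/
def Wdual (C : Ctx Ω) (t : ℝ) :
    Set ((Fin C.d → @MeasureTheory.Measure Ω C.m0) × (Ω → EV C)) :=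
  {Qw | IsVProb C Qw.1 ∧ Qw.2 ∈ posDual C t (MspPos C t) ∧ Qw.2 ∉ Mperp C t ∧
    MeasureTheory.MemLp (wts C Qw.1 Qw.2 t C.T) C.q C.P ∧
    (∀ᵐ ω ∂C.P, ∀ i, 0 ≤ wts C Qw.1 Qw.2 t C.T ω i) ∧ restrP C Qw.1 t}

/-- `W_t^{max}` relative to an acceptance set `A`. -/
def WdualMax (C : Ctx Ω) (t : ℝ) (A : Set (LpSp C)) :
    Set ((Fin C.d → @MeasureTheory.Measure Ω C.m0) × (Ω → EV C)) :=
  {Qw ∈ Wdual C t | wts C Qw.1 Qw.2 t C.T ∈ accDual C A}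

/-- `W_t^e`: dual variables whose vector measure is equivalent to `P`. -/
def WdualE (C : Ctx Ω) (t : ℝ) :
    Set ((Fin C.d → @MeasureTheory.Measure Ω C.m0) × (Ω → EV C)) :=
  {Qw ∈ Wdual C t | ∀ i, C.P ≪ Qw.1 i}

/-- translate of a set of `L^p` elements by a (possibly non-`L^p`) function `g`. -/
def shiftSet (C : Ctx Ω) (g : Ω → EV C) (S : Set (LpSp C)) : Set (LpSp C) :=
  {u | ∃ v ∈ S, ⇑u =ᵐ[C.P] fun ω => g ω + (⇑v : Ω → EV C) ω}

/-- `(E^Q[-X|F_t] + G_t(w)) ∩ M_t`. -/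
def EQhalfG (C : Ctx Ω) (Q : Fin C.d → @MeasureTheory.Measure Ω C.m0) (t : ℝ)
    (X : Ω → EV C) (w : Ω → EV C) : Set (LpSp C) :=
  shiftSet C (condExpQ C Q t (-X)) (G C t w) ∩ Msp C t

/-- `(E^Q[-X|F_t] + Γ_t(w)) ∩ M_t`. -/
def EQhalfGam (C : Ctx Ω) (Q : Fin C.d → @MeasureTheory.Measure Ω C.m0) (t : ℝ)
    (X : Ω → EV C) (w : Ω → EV C) : Set (LpSp C) :=
  shiftSet C (condExpQ C Q t (-X)) (Gam C t w) ∩ Msp C t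

/-- the minimal penalty function `β_t(Q,w)` built from an acceptance set `A`. -/
def penalty (C : Ctx Ω) (t : ℝ) (A : Set (LpSp C))
    (Q : Fin C.d → @MeasureTheory.Measure Ω C.m0) (w : Ω → EV C) : Set (LpSp C) :=
  ⋂ Y ∈ A, EQhalfG C Q t (⇑Y) w

/-- the minimal conditional penalty function `α_t(Q,w)` built from an acceptance set `A`. -/
def condPenalty (C : Ctx Ω) (t : ℝ) (A : Set (LpSp C))
    (Q : Fin C.d → @MeasureTheory.Measure Ω C.m0) (w : Ω → EV C) : Set (LpSp C) :=
  ⋂ Y ∈ A, EQhalfGam C Q t (⇑Y) w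

/-- the elementwise conditional expectation `E^Q[S | F_t]` of a set `S ⊆ L^p`. -/
def EQset (C : Ctx Ω) (Q : Fin C.d → @MeasureTheory.Measure Ω C.m0) (t : ℝ)
    (S : Set (LpSp C)) : Set (LpSp C) :=
  {u | ∃ v ∈ S, ⇑u =ᵐ[C.P] condExpQ C Q t ⇑v}

/-- the product of a bounded measurable function with an `L^p` element. -/
def smulBdd (C : Ctx Ω) (φ : Ω → ℝ) (hφ : MeasureTheory.MemLp φ ∞ C.P) (f : LpSp C) :
    LpSp C :=
  MeasureTheory.MemLp.toLp (φ • ⇑f) ((MeasureTheory.Lp.memLp f).smul hφ)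

/-- a conditional risk measure at time `t`. -/
structure IsCRM (C : Ctx Ω) (t : ℝ) (R : LpSp C → Set (LpSp C)) : Prop where
  subM : ∀ X, R X ⊆ Msp C t
  upper : ∀ X, R X + MspPos C t = R X
  transl : ∀ X, ∀ mt ∈ Msp C t, R (X + mt) = (fun u => u - mt) '' R X
  mono : ∀ X Y : LpSp C, Y - X ∈ LpPos C → R X ⊆ R Y
  finite0 : R 0 ≠ ∅ ∧ R 0 ≠ Msp C t

/-- normalization: `R(X) = R(X) + R(0)`. -/
def Normalized (C : Ctx Ω) (R : LpSp C → Set (LpSp C)) : Prop :=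
  ∀ X, R X + R 0 = R X

/-- convexity of a set-valued risk measure. -/
def ConvexRM (C : Ctx Ω) (R : LpSp C → Set (LpSp C)) : Prop :=
  ∀ X Y : LpSp C, ∀ l : ℝ, 0 ≤ l → l ≤ 1 →
    l • R X + (1 - l) • R Y ⊆ R (l • X + (1 - l) • Y)

/-- positive homogeneity. -/
def PosHom (C : Ctx Ω) (R : LpSp C → Set (LpSp C)) : Prop :=
  ∀ X : LpSp C, ∀ l : ℝ, 0 < l → R (l • X) = l • R X

/-- conditional convexity. -/
def CondConvexRM (C : Ctx Ω) (t : ℝ) (R : LpSp C → Set (LpSp C)) : Prop :=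
  ∀ (φ ψ : Ω → ℝ) (hφ : MeasureTheory.MemLp φ ∞ C.P) (hψ : MeasureTheory.MemLp ψ ∞ C.P),
    measT1 C t φ → measT1 C t ψ →
    (∀ᵐ ω ∂C.P, 0 ≤ φ ω ∧ 0 ≤ ψ ω ∧ φ ω + ψ ω = 1) →
    ∀ X Y : LpSp C,
      smulBdd C φ hφ '' R X + smulBdd C ψ hψ '' R Y ⊆
        R (smulBdd C φ hφ X + smulBdd C ψ hψ Y)

/-- conditional positive homogeneity. -/
def CondPosHom (C : Ctx Ω) (t : ℝ) (R : LpSp C → Set (LpSp C)) : Prop :=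
  ∀ (φ : Ω → ℝ) (hφ : MeasureTheory.MemLp φ ∞ C.P), measT1 C t φ →
    (∀ᵐ ω ∂C.P, 0 < φ ω) → ∀ X : LpSp C, R (smulBdd C φ hφ X) = smulBdd C φ hφ '' R X

/-- closedness of the graph. -/
def ClosedRM (C : Ctx Ω) (R : LpSp C → Set (LpSp C)) : Prop :=
  IsClosed {z : LpSp C × LpSp C | z.2 ∈ R z.1}

/-- the image space `G(M_t; M_{t,+})`. -/
def GPlus (C : Ctx Ω) (t : ℝ) : Set (Set (LpSp C)) :=
  {D | D ⊆ Msp C t ∧ D = closure (convexHull ℝ (D + MspPos C t))}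

/-- the collection `G(M_t; M_{t,-})`. -/
def GMinus (C : Ctx Ω) (t : ℝ) : Set (Set (LpSp C)) :=
  {D | D ⊆ Msp C t ∧ D = closure (convexHull ℝ (D + -MspPos C t))}

/-- convex upper continuity. -/
def CUC (C : Ctx Ω) (t : ℝ) (R : LpSp C → Set (LpSp C)) : Prop :=
  ∀ D ∈ GMinus C t, IsClosed {X : LpSp C | (R X ∩ D).Nonempty}

/-- a conditionally convex subset of `L^p`. -/
def CondConvexSet (C : Ctx Ω) (t : ℝ) (D : Set (LpSp C)) : Prop :=
  ∀ (φ ψ : Ω → ℝ) (hφ : MeasureTheory.MemLp φ ∞ C.P) (hψ : MeasureTheory.MemLp ψ ∞ C.P),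
    measT1 C t φ → measT1 C t ψ →
    (∀ᵐ ω ∂C.P, 0 ≤ φ ω ∧ 0 ≤ ψ ω ∧ φ ω + ψ ω = 1) →
    ∀ x ∈ D, ∀ y ∈ D, smulBdd C φ hφ x + smulBdd C ψ hψ y ∈ D

/-- conditionally convex upper continuity. -/
def CCUC (C : Ctx Ω) (t : ℝ) (R : LpSp C → Set (LpSp C)) : Prop :=
  ∀ D ∈ GMinus C t, CondConvexSet C t D → IsClosed {X : LpSp C | (R X ∩ D).Nonempty}

/-- the acceptance set of a conditional risk measure. -/
def Acc (C : Ctx Ω) (R : LpSp C → Set (LpSp C)) : Set (LpSp C) := {X | 0 ∈ R X}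

/-- multiportfolio time consistency of a dynamic risk measure. -/
def MPTC (C : Ctx Ω) (R : ℝ → LpSp C → Set (LpSp C)) : Prop :=
  ∀ t s : ℝ, 0 ≤ t → t < s → s ≤ C.T → ∀ X : LpSp C, ∀ 𝒴 : Set (LpSp C),
    R s X ⊆ ⋃ Y ∈ 𝒴, R s Y → R t X ⊆ ⋃ Y ∈ 𝒴, R t Y

/-- the recession cone of a subset of `M_t`. -/
def recc (C : Ctx Ω) (t : ℝ) (S : Set (LpSp C)) : Set (LpSp C) :=
  {r ∈ Msp C t | ∀ u ∈ S, ∀ l : ℝ, 0 ≤ l → u + l • r ∈ S}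

end MultiRisk

namespace MultiRisk
variable {Ω : Type*}

/-! For real `c`, the set `{u ∈ M_t | E[wᵀu] ≤ c}` is closed and convex (the pairing with
`w ∈ L^q` is continuous on `L^p`) and absorbs `M_{t,-}` (because `w ∈ M_{t,+}^+`), so it lies in
`G(M_t; M_{t,-})`. Convex upper continuity then makes `{X | ∃ u ∈ R_t(X), E[wᵀu] ≤ c}` closed
for every `c`, which is exactly what lower semicontinuity of the infimum needs. -/

instance holderConjugate (C : Ctx Ω) : ENNReal.HolderConjugate C.p C.q :=
  ENNReal.holderConjugate_iff.2 (by simpa [one_div] using C.hpq)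

instance factOneLeQ (C : Ctx Ω) : Fact (1 ≤ C.q) := ⟨ENNReal.HolderConjugate.one_le C.q C.p⟩

def dotProductCLM (C : Ctx Ω) : EV C →L[ℝ] EV C →L[ℝ] ℝ :=
  LinearMap.toContinuousLinearMap
    (LinearMap.toContinuousLinearMap.toLinearMap ∘ₗ dotProductBilin ℝ ℝ)

lemma dotProductCLM_apply (C : Ctx Ω) (x y : EV C) : dotProductCLM C x y = ∑ i, x i * y i := by
  simp [dotProductCLM, dotProduct]

def pairingCLM (C : Ctx Ω) {w : Ω → EV C} (hw : MemLp w C.q C.P) : LpSp C →L[ℝ] ℝ :=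
  (dotProductCLM C).lpPairing C.P C.q C.p (hw.toLp w)

lemma pairingCLM_apply (C : Ctx Ω) {w : Ω → EV C} (hw : MemLp w C.q C.P) (u : LpSp C) :
    pairingCLM C hw u = pairF C w u := by
  rw [pairingCLM, ContinuousLinearMap.lpPairing_eq_integral]
  exact integral_congr_ae <| hw.coeFn_toLp.mono fun ω hω => by
    simp [pairPt, dotProductCLM_apply, hω]

lemma continuous_pairF (C : Ctx Ω) {w : Ω → EV C} (hw : MemLp w C.q C.P) :
    Continuous fun u : LpSp C => pairF C w u := by
  simp_rw [← pairingCLM_apply C hw]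
  exact (pairingCLM C hw).continuous

def tailProj (C : Ctx Ω) : EV C →L[ℝ] EV C :=
  ContinuousLinearMap.pi fun i => if C.em ≤ (i : ℕ) then ContinuousLinearMap.proj i else 0

lemma tailProj_eq_zero_iff (C : Ctx Ω) (x : EV C) : tailProj C x = 0 ↔ inM C x := by
  simp only [funext_iff, tailProj, ContinuousLinearMap.pi_apply, Pi.zero_apply, inM]
  refine forall_congr' fun i => ?_
  split_ifs with h <;> simp [h]

def eligibleSubmodule (C : Ctx Ω) (t : ℝ) : Submodule ℝ (LpSp C) :=
  @lpMeas Ω (EV C) ℝ _ _ _ (C.F t) C.m0 C.p C.P ⊓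
    LinearMap.ker (ContinuousLinearMap.compLpL C.p C.P (tailProj C) : LpSp C →ₗ[ℝ] LpSp C)

lemma coe_eligibleSubmodule (C : Ctx Ω) (t : ℝ) :
    (eligibleSubmodule C t : Set (LpSp C)) = Msp C t := by
  ext f
  change _ ∧ _ ↔ _ ∧ _
  refine and_congr Iff.rfl ?_
  rw [SetLike.mem_coe, LinearMap.mem_ker, ContinuousLinearMap.coe_coe,
    Lp.eq_zero_iff_ae_eq_zero]
  refine ⟨fun h => ?_, fun h => ?_⟩
  · filter_upwards [ContinuousLinearMap.coeFn_compLpL (tailProj C) f, h] with ω h1 h2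
    rw [← tailProj_eq_zero_iff, ← h1, h2, Pi.zero_apply]
  · filter_upwards [ContinuousLinearMap.coeFn_compLpL (tailProj C) f, h] with ω h1 h2
    rw [h1, Pi.zero_apply, tailProj_eq_zero_iff]
    exact h2

lemma mem_eligibleSubmodule_iff {C : Ctx Ω} {t : ℝ} {u : LpSp C} :
    u ∈ eligibleSubmodule C t ↔ u ∈ Msp C t :=
  Set.ext_iff.1 (coe_eligibleSubmodule C t) u

lemma isClosed_Msp (C : Ctx Ω) (t : ℝ) : IsClosed (Msp C t) := by
  rw [← coe_eligibleSubmodule]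
  exact (isClosed_aestronglyMeasurable (C.F.le t)).inter
    (ContinuousLinearMap.isClosed_ker _)

lemma zero_mem_MspPos (C : Ctx Ω) (t : ℝ) : (0 : LpSp C) ∈ MspPos C t := by
  refine ⟨mem_eligibleSubmodule_iff.1 (eligibleSubmodule C t).zero_mem, ?_⟩
  filter_upwards [Lp.coeFn_zero (EV C) C.p C.P] with ω h i
  rw [h]
  exact le_rfl

lemma mem_GMinus_of_isClosed_of_convex {C : Ctx Ω} {t : ℝ} {D : Set (LpSp C)}
    (hDM : D ⊆ Msp C t) (hclosed : IsClosed D) (hconv : Convex ℝ D)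
    (hdown : D + -MspPos C t ⊆ D) : D ∈ GMinus C t := by
  have hzero : (0 : LpSp C) ∈ -MspPos C t := by simpa using zero_mem_MspPos C t
  refine ⟨hDM, ?_⟩
  rw [hdown.antisymm (Set.subset_add_left D hzero), hconv.convexHull_eq, hclosed.closure_eq]

def mspHalfSpace (C : Ctx Ω) (t : ℝ) (w : Ω → EV C) (c : ℝ) : Set (LpSp C) :=
  {u ∈ Msp C t | pairF C w u ≤ c}

lemma mspHalfSpace_mem_GMinus {C : Ctx Ω} {t : ℝ} {w : Ω → EV C}
    (hw : w ∈ posDual C t (MspPos C t)) (c : ℝ) : mspHalfSpace C t w c ∈ GMinus C t := by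
  obtain ⟨hwq, -, hwpos⟩ := hw
  have hhalf : mspHalfSpace C t w c
      = (eligibleSubmodule C t : Set (LpSp C)) ∩ {u | pairingCLM C hwq u ≤ c} := by
    simp only [coe_eligibleSubmodule, pairingCLM_apply]; rfl
  refine mem_GMinus_of_isClosed_of_convex (fun u hu => hu.1) ?_ ?_ ?_
  · exact (isClosed_Msp C t).inter (isClosed_le (continuous_pairF C hwq) continuous_const)
  · rw [hhalf]
    exact (eligibleSubmodule C t).convex.inter
      (convex_halfSpace_le (pairingCLM C hwq).toLinearMap.isLinear c)
  · rintro _ ⟨a, ⟨haM, hac⟩, b, hb, rfl⟩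
    rw [Set.mem_neg] at hb
    have hbM : b ∈ eligibleSubmodule C t :=
      neg_neg b ▸ (eligibleSubmodule C t).neg_mem (mem_eligibleSubmodule_iff.2 hb.1)
    have hb0 : pairF C w b ≤ 0 := by
      have := hwpos _ hb
      rw [← pairingCLM_apply C hwq, map_neg, pairingCLM_apply] at this
      linarith
    refine ⟨mem_eligibleSubmodule_iff.1 (add_mem (mem_eligibleSubmodule_iff.2 haM) hbM), ?_⟩
    rw [← pairingCLM_apply C hwq, map_add, pairingCLM_apply, pairingCLM_apply]
    linarith

theorem lowerSemicontinuous_biInf_coe_of_isClosed {α β : Type*} [TopologicalSpace α]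
    {R : α → Set β} {g : β → ℝ} (h : ∀ c : ℝ, IsClosed {x | ∃ u ∈ R x, g u ≤ c}) :
    LowerSemicontinuous fun x => ⨅ u ∈ R x, (g u : EReal) := by
  intro x₀ y hy
  obtain ⟨c, hyc, hcx₀⟩ := EReal.exists_between_coe_real hy
  have hx₀ : x₀ ∉ {x | ∃ u ∈ R x, g u ≤ c} := fun ⟨u, hu, huc⟩ =>
    (iInf₂_le u hu).trans (EReal.coe_le_coe huc) |>.not_gt hcx₀
  filter_upwards [(h c).isOpen_compl.mem_nhds hx₀] with x hx
  exact hyc.trans_le <| le_iInf₂ fun u hu =>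
    EReal.coe_le_coe (not_le.1 fun huc => hx ⟨u, hu, huc⟩).le

theorem statement13_general (C : Ctx Ω) (t : ℝ)
    (R : LpSp C → Set (LpSp C)) (hcrm : IsCRM C t R) (hcuc : CUC C t R)
    (w : Ω → EV C) (hw : w ∈ posDual C t (MspPos C t) \ Mperp C t) :
    LowerSemicontinuous fun X : LpSp C => ⨅ u ∈ R X, ((pairF C w ⇑u : ℝ) : EReal) := by
  refine lowerSemicontinuous_biInf_coe_of_isClosed fun c => ?_
  convert hcuc _ (mspHalfSpace_mem_GMinus hw.1 c) using 1
  ext X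
  exact ⟨fun ⟨u, hu, huc⟩ => ⟨u, hu, hcrm.subM X hu, huc⟩, fun ⟨u, hu, _, huc⟩ => ⟨u, hu, huc⟩⟩

/-- lower semicontinuity of the scalarization of a c.u.c. risk measure
(Proposition `prop_lsc`). -/
theorem statement13 (C : Ctx Ω) (t : ℝ) (ht0 : 0 ≤ t) (htT : t ≤ C.T)
    (R : LpSp C → Set (LpSp C)) (hcrm : IsCRM C t R) (hcuc : CUC C t R)
    (w : Ω → EV C) (hw : w ∈ posDual C t (MspPos C t) \ Mperp C t) :
    LowerSemicontinuous fun X : LpSp C => ⨅ u ∈ R X, ((pairF C w ⇑u : ℝ) : EReal) :=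
  statement13_general C t R hcrm hcuc w hw

end MultiRisk
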